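/- arXiv:1802.06529 — 2 statements merged into one kernel-verified Lean document; each statement's English description precedes it below -/
import Mathlib

section
/- If some word w ∈ Σ* of length n never occurs in a sequence X ∈ Σ^ℕ as a factor (i.e. X is not disjunctive, where X is disjunctive if every finite binary word occurs in X as a factor), then there exists a nonnegative integer-valued supermartingale d : Σ* → ℤ≥0 succeeding on X. -/
def pref (X : ℕ → Bool) (n : ℕ) : List Bool := (List.range n).map X

namespace NDSM

def D (w : List Bool) : ℤ := 2 ^ w.length - 1

def g (w : List Bool) (K : ℤ) : ℤ := K / D w

def step (w : List Bool) (s : ℤ × List Bool) (b : Bool) : ℤ × List Bool :=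
  if s.2.length + 1 = w.length then
    (if s.2 ++ [b] = w then s.1 - D w * g w s.1 else s.1 + g w s.1, [])
  else (s.1, s.2 ++ [b])

def run (w : List Bool) (σ : List Bool) : ℤ × List Bool :=
  σ.foldl (step w) (D w, [])

def d (w : List Bool) (σ : List Bool) : ℤ :=
  if (run w σ).2 <+: w then
    (run w σ).1 - g w (run w σ).1 * (2 ^ (run w σ).2.length - 1)
  else (run w σ).1 + g w (run w σ).1

lemma hD {w : List Bool} (hn : 0 < w.length) : 0 < D w := by
  have : (2:ℤ) ≤ 2 ^ w.length := le_self_pow₀ (by norm_num) (by omega)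
  simp only [D]; omega

lemma g_nonneg {w : List Bool} (hn : 0 < w.length) {K : ℤ} (hK : 0 ≤ K) : 0 ≤ g w K :=
  Int.ediv_nonneg hK (le_of_lt (hD hn))

lemma gD_le {w : List Bool} (hn : 0 < w.length) {K : ℤ} (hK : 0 ≤ K) : D w * g w K ≤ K := by
  have h := Int.emod_nonneg K (ne_of_gt (hD hn))
  have h2 := Int.emod_def K (D w)
  simp only [g]; omega

lemma run_concat (w : List Bool) (σ : List Bool) (b : Bool) :
    run w (σ ++ [b]) = step w (run w σ) b := by
  simp [run, List.foldl_append]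

lemma inv {w : List Bool} (hn : 0 < w.length) (σ : List Bool) :
    0 ≤ (run w σ).1 ∧ (run w σ).2.length < w.length := by
  induction σ using List.reverseRecOn with
  | nil => exact ⟨le_of_lt (by simpa [run] using hD hn), by simpa [run] using hn⟩
  | append_singleton σ b ih =>
    obtain ⟨hK, hv⟩ := ih
    rw [run_concat]
    simp only [step]
    split_ifs with h1 h2
    · exact ⟨by have := gD_le hn hK; simp; omega, by simpa using hn⟩
    · exact ⟨by have := g_nonneg hn hK; simp; omega, by simpa using hn⟩
    · exact ⟨hK, by simp; omega⟩


lemma nil_case {w : List Bool} : ([] : List Bool) <+: w := List.nil_prefix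

lemma d_concat (w : List Bool) (σ : List Bool) (b : Bool) :
    d w (σ ++ [b]) =
      if (run w σ).2.length + 1 = w.length then
        (if (run w σ).2 ++ [b] = w then (run w σ).1 - D w * g w (run w σ).1
         else (run w σ).1 + g w (run w σ).1)
      else
        (if (run w σ).2 ++ [b] <+: w then
           (run w σ).1 - g w (run w σ).1 * (2 ^ ((run w σ).2.length + 1) - 1)
         else (run w σ).1 + g w (run w σ).1) := by
  simp only [d, run_concat, step]
  by_cases h1 : (run w σ).2.length + 1 = w.length
  · simp [h1]
  · simp [h1]

lemma take_ext {v w : List Bool} (hp : v <+: w) (hlt : v.length < w.length) :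
    ∃ b0, w.take (v.length + 1) = v ++ [b0] := by
  obtain ⟨r, hr⟩ := hp
  cases r with
  | nil => exfalso; rw [← hr] at hlt; simp at hlt
  | cons b0 r' =>
    refine ⟨b0, ?_⟩
    rw [← hr]
    rw [show v.length + 1 = v.length + 1 from rfl]
    rw [List.take_append]
    simp

lemma ext_prefix_iff {v w : List Bool} (hp : v <+: w) (hlt : v.length < w.length)
    {b0 : Bool} (htake : w.take (v.length + 1) = v ++ [b0]) (b : Bool) :
    (v ++ [b] <+: w ↔ b = b0) := by
  constructor
  · intro h
    have := List.prefix_iff_eq_take.mp h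
    rw [List.length_append] at this
    simp only [List.length_singleton] at this
    rw [htake] at this
    simpa using this
  · rintro rfl
    rw [← htake]; exact List.take_prefix _ _


lemma d_nonneg {w : List Bool} (hn : 0 < w.length) (σ : List Bool) : 0 ≤ d w σ := by
  obtain ⟨hK, hv⟩ := inv hn σ
  have hg := g_nonneg hn hK
  have hgD := gD_le hn hK
  simp only [d]
  split_ifs with hp
  · have ht : (2:ℤ) ^ (run w σ).2.length ≤ 2 ^ w.length :=
      pow_le_pow_right₀ (by norm_num) hv.le
    have h1 : g w (run w σ).1 * (2 ^ (run w σ).2.length - 1) ≤ g w (run w σ).1 * D w :=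
      mul_le_mul_of_nonneg_left (by simp only [D]; omega) hg
    have h2 : g w (run w σ).1 * D w = D w * g w (run w σ).1 := mul_comm _ _
    linarith
  · linarith

lemma superm {w : List Bool} (hn : 0 < w.length) (σ : List Bool) :
    d w (σ ++ [false]) + d w (σ ++ [true]) ≤ 2 * d w σ := by
  obtain ⟨hK, hv⟩ := inv hn σ
  have hg := g_nonneg hn hK
  have hgD := gD_le hn hK
  have hpow : (2:ℤ) ^ ((run w σ).2.length + 1) = 2 * 2 ^ (run w σ).2.length := by
    rw [pow_succ]; ring
  rw [d_concat, d_concat]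
  simp only [d]
  by_cases h1 : (run w σ).2.length + 1 = w.length
  · simp only [if_pos h1]
    by_cases hp : (run w σ).2 <+: w
    · obtain ⟨b0, hb0⟩ := take_ext hp hv
      have hweq : w = (run w σ).2 ++ [b0] := by rw [← hb0, h1, List.take_length]
      have hD' : D w = 2 * 2 ^ (run w σ).2.length - 1 := by
        simp only [D]; rw [← h1, hpow]
      rw [if_pos hp]
      have harr : ∀ A B : ℤ, A - D w * B + (A + B) = 2 * (A - B * (2 ^ (run w σ).2.length - 1)) := by
        intro A B; rw [hD']; ring
      cases b0
      · rw [if_pos hweq.symm,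
          if_neg (fun h => by simpa using h.trans hweq)]
        exact le_of_eq (harr _ _)
      · rw [if_neg (fun h => by simpa using h.trans hweq),
          if_pos hweq.symm]
        exact le_of_eq (by rw [hD']; ring)
    · have h2 : ∀ b, ¬ ((run w σ).2 ++ [b] = w) := fun b hbw =>
        hp ((List.prefix_append (run w σ).2 [b]).trans ⟨[], by simp [hbw]⟩)
      rw [if_neg hp, if_neg (h2 false), if_neg (h2 true)]
      linarith
  · simp only [if_neg h1]
    by_cases hp : (run w σ).2 <+: w
    · obtain ⟨b0, hb0⟩ := take_ext hp hv
      have hiff := ext_prefix_iff hp hv hb0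
      rw [if_pos hp]
      cases b0
      · rw [if_pos ((hiff false).mpr rfl),
          if_neg (fun h => by simpa using (hiff true).mp h)]
        exact le_of_eq (by rw [hpow]; ring)
      · rw [if_neg (fun h => by simpa using (hiff false).mp h),
          if_pos ((hiff true).mpr rfl)]
        exact le_of_eq (by rw [hpow]; ring)
    · have h2 : ∀ b, ¬ ((run w σ).2 ++ [b] <+: w) := fun b h =>
        hp ((List.prefix_append (run w σ).2 [b]).trans h)
      rw [if_neg hp, if_neg (h2 false), if_neg (h2 true)]
      linarith


lemma ofFn_eq_map_range (n : ℕ) (f : ℕ → Bool) :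
    List.ofFn (fun j : Fin n => f j) = (List.range n).map f := by
  apply List.ext_getElem <;> simp

lemma pref_add (X : ℕ → Bool) (a b : ℕ) :
    pref X (a + b) = pref X a ++ (List.range b).map (fun j => X (a + j)) := by
  simp [pref, List.range_add, Function.comp]

lemma foldl_block {w : List Bool} :
    ∀ (u v : List Bool) (K : ℤ), u ≠ [] → v.length + u.length = w.length →
      List.foldl (step w) (K, v) u =
        (if v ++ u = w then K - D w * g w K else K + g w K, []) := by
  intro u
  induction u with
  | nil => intro v K h; exact absurd rfl h
  | cons b u' ih =>
    intro v K _ hlen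
    by_cases hu : u' = []
    · subst hu
      have h1 : v.length + 1 = w.length := by simpa using hlen
      simp [step, h1]
    · have hlb : ¬ (v.length + 1 = w.length) := by
        have : 0 < u'.length := List.length_pos_iff.mpr hu
        simp only [List.length_cons] at hlen; omega
      simp only [List.foldl_cons, step, if_neg hlb]
      rw [ih (v ++ [b]) K hu (by simp at hlen ⊢; omega)]
      have hc : v ++ [b] ++ u' = v ++ b :: u' := by simp
      rw [hc]

lemma run_blocks {w : List Bool} (hn : 0 < w.length) (X : ℕ → Bool)
    (hw : ∀ i, ¬ ((List.range w.length).map (fun j => X (i + j)) = w)) :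
    ∀ q : ℕ, ∃ K, run w (pref X (q * w.length)) = (K, []) ∧ (D w + q : ℤ) ≤ K := by
  intro q
  induction q with
  | zero => exact ⟨D w, by simp [pref, run], by simp⟩
  | succ q ih =>
    obtain ⟨K, hrun, hK⟩ := ih
    have hsplit : pref X ((q + 1) * w.length)
        = pref X (q * w.length) ++ (List.range w.length).map (fun j => X (q * w.length + j)) := by
      rw [show (q + 1) * w.length = q * w.length + w.length by ring, pref_add]
    have hblock : ¬ (([] : List Bool) ++ (List.range w.length).map (fun j => X (q * w.length + j)) = w) := by
      simpa using hw (q * w.length)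
    have hne : (List.range w.length).map (fun j => X (q * w.length + j)) ≠ [] := by
      intro h
      have h2 := congrArg List.length h
      simp only [List.length_map, List.length_range, List.length_nil] at h2
      omega
    have hrun2 : run w (pref X ((q + 1) * w.length)) = (K + g w K, []) := by
      rw [hsplit, run, List.foldl_append, ← run, hrun,
        foldl_block _ [] K hne (by simp), if_neg hblock]
    have hKpos : (0:ℤ) ≤ K := le_trans (by have := hD hn; positivity) hK
    have hg1 : 1 ≤ g w K := by
      rw [g, Int.le_ediv_iff_mul_le (hD hn)]
      have : (0:ℤ) ≤ q := Int.natCast_nonneg q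
      linarith
    exact ⟨K + g w K, hrun2, by push_cast; linarith⟩

end NDSM

/-- If `X` is not disjunctive (some binary word never occurs in `X` as a
factor), then some nonnegative integer-valued supermartingale succeeds on
`X`. -/
theorem not_disjunctive_implies_supermartingale_succeeds
    (X : ℕ → Bool)
    (hnd : ¬ ∀ w : List Bool, ∃ i : ℕ,
      (List.ofFn fun j : Fin w.length => X (i + (j : ℕ))) = w) :
    ∃ d : List Bool → ℤ,
      (∀ σ : List Bool, 0 ≤ d σ) ∧
      (∀ σ : List Bool, d (σ ++ [false]) + d (σ ++ [true]) ≤ 2 * d σ) ∧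
      (∀ c : ℤ, ∃ m : ℕ, c < d (pref X m)) := by
  push_neg at hnd
  obtain ⟨w, hw⟩ := hnd
  have hn : 0 < w.length := by
    rcases Nat.eq_zero_or_pos w.length with h0 | h
    · exfalso
      have hwnil : w = [] := List.eq_nil_of_length_eq_zero h0
      exact hw 0 (by subst hwnil; simp)
    · exact h
  have hw' : ∀ i, ¬ ((List.range w.length).map (fun j => X (i + j)) = w) := by
    intro i
    rw [← NDSM.ofFn_eq_map_range w.length (fun j => X (i + j))]
    exact hw i
  refine ⟨NDSM.d w, fun σ => NDSM.d_nonneg hn σ, fun σ => NDSM.superm hn σ, ?_⟩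
  intro c
  obtain ⟨K, hrun, hK⟩ := NDSM.run_blocks hn X hw' (c.toNat + 1)
  refine ⟨(c.toNat + 1) * w.length, ?_⟩
  have hd : NDSM.d w (pref X ((c.toNat + 1) * w.length)) = K := by
    simp [NDSM.d, hrun, List.nil_prefix]
  rw [hd]
  have h1 : c ≤ (c.toNat : ℤ) := Int.self_le_toNat c
  have h2 := NDSM.hD hn
  push_cast at hK
  linarith
end

section
/- Multiplying the block construction by (2^n−1)^k makes it integer-valued: with q = 2^n/(2^n−1) and the partial martingale d on Σ^{≤nk} defined by backpropagation from d(σ₁…σ_k) = q^k·∏1_{σᵢ≠w}, the function (2^n−1)^k · d takes values in ℤ≥0 on every word of length at most nk. -/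
/-- Multiplying the block construction by `(2^n - 1)^k` makes it
integer-valued: the partial martingale obtained by backpropagation from the
blockwise product values is, after scaling by `(2^n - 1)^k`, a nonnegative
integer on every word of length at most `n*k`. -/
theorem scaled_block_martingale_integer_valued
    (n k : ℕ) (hn : 1 ≤ n) (hk : 1 ≤ k)
    (w : List Bool) (hw : w.length = n)
    (q : ℚ) (hq : q = (2 ^ n : ℚ) / ((2 ^ n : ℚ) - 1))
    (d : List Bool → ℚ)
    (htop : ∀ τ : List Bool, τ.length = n * k →
      d τ = q ^ k *
        ∏ i ∈ Finset.range k, (if (τ.drop (i * n)).take n = w then 0 else 1))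
    (hrec : ∀ σ : List Bool, σ.length < n * k →
      d σ = (d (σ ++ [false]) + d (σ ++ [true])) / 2) :
    ∀ σ : List Bool, σ.length ≤ n * k →
      ∃ a : ℕ, ((2 ^ n : ℚ) - 1) ^ k * d σ = (a : ℚ) := by
  have hne : ((2 : ℚ) ^ n - 1) ≠ 0 := by
    have : (1 : ℚ) < 2 ^ n := by
      have : (1 : ℚ) < 2 ^ 1 := by norm_num
      calc (1:ℚ) < 2 ^ 1 := this
        _ ≤ 2 ^ n := by
          apply pow_le_pow_right₀ (by norm_num) hn
    linarith
  have key : ∀ m : ℕ, ∀ σ : List Bool, σ.length ≤ n * k → n * k - σ.length = m →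
      ∃ a : ℕ, ((2 ^ n : ℚ) - 1) ^ k * d σ = (2 : ℚ) ^ σ.length * a := by
    intro m
    induction m with
    | zero =>
      intro σ hσ hm
      have hlen : σ.length = n * k := by omega
      rw [htop σ hlen]
      refine ⟨∏ i ∈ Finset.range k,
        (if (σ.drop (i * n)).take n = w then 0 else 1), ?_⟩
      have hcast : ((∏ i ∈ Finset.range k,
          (if (σ.drop (i * n)).take n = w then (0:ℕ) else 1) : ℕ) : ℚ)
          = ∏ i ∈ Finset.range k,
            (if (σ.drop (i * n)).take n = w then (0:ℚ) else 1) := by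
        push_cast
        apply Finset.prod_congr rfl
        intro i _
        split <;> norm_num
      rw [hcast, hlen]
      have hqk : ((2 : ℚ) ^ n - 1) ^ k * q ^ k = (2 : ℚ) ^ (n * k) := by
        rw [hq, ← mul_pow, pow_mul]
        congr 1
        field_simp
      rw [← mul_assoc, hqk]
    | succ m ih =>
      intro σ hσ hm
      have hlt : σ.length < n * k := by omega
      obtain ⟨a0, h0⟩ := ih (σ ++ [false]) (by simp; omega) (by simp; omega)
      obtain ⟨a1, h1⟩ := ih (σ ++ [true]) (by simp; omega) (by simp; omega)
      simp only [List.length_append, List.length_singleton] at h0 h1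
      refine ⟨a0 + a1, ?_⟩
      rw [hrec σ hlt]
      rw [mul_div_assoc', mul_add, h0, h1]
      push_cast
      ring
  intro σ hσ
  obtain ⟨a, ha⟩ := key (n * k - σ.length) σ hσ rfl
  exact ⟨2 ^ σ.length * a, by rw [ha]; push_cast; ring⟩
end
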